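/- arXiv:1811.07364 — 2 statements merged into one kernel-verified Lean document; each statement's English description precedes it below -/
import Mathlib

section
/- Let n^PL be the polylogarithmic quotient of the free graded Lie algebra on e_0, e_1 (degree -1), i.e., n/[N,N] where N is the ideal generated by e_1. Then the degree ≤ -2 part of n^PL is abelian: [n^PL_{≤ -2}, n^PL_{≤ -2}] = 0. -/
/-!
Modulo the ideal `N` generated by `e₁`, the free Lie algebra is spanned by the image of `e₀`, so
it is abelian: `⁅n, n⁆ ≤ N`. Hence `⁅⁅n, n⁆, ⁅n, n⁆⁆ ≤ ⁅N, N⁆`, which vanishes in `n^PL`, and the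
second derived ideal of `n^PL` is the image of that of `n` because `n → n^PL` is onto.
-/

noncomputable section

/-- The free Lie algebra over ℚ on two generators `e₀, e₁` (both of degree -1). -/
abbrev FL : Type := FreeLieAlgebra ℚ Bool

def e0 : FL := FreeLieAlgebra.of ℚ false
def e1 : FL := FreeLieAlgebra.of ℚ true

/-- The Lie ideal generated by `e₁`. -/
def N : LieIdeal ℚ FL := LieSubmodule.lieSpan ℚ FL {e1}

/-- The polylogarithmic quotient `n^PL = n/[N,N]`. -/
abbrev nPL : Type := FL ⧸ (⁅N, N⁆ : LieIdeal ℚ FL)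

namespace FreeLieAlgebra

variable {R X : Type*} [CommRing R]

theorem eq_top_of_forall_of_mem (K : LieSubalgebra R (FreeLieAlgebra R X)) (h : ∀ x, of R x ∈ K) :
    K = ⊤ := by
  let g : FreeLieAlgebra R X →ₗ⁅R⁆ K := lift R fun x ↦ ⟨of R x, h x⟩
  have hg : K.incl.comp g = LieHom.id := hom_ext fun x ↦ by simp [g]
  rw [eq_top_iff]
  intro y _
  rw [← LieHom.id_apply (R := R) y, ← hg]
  exact (g y).2

end FreeLieAlgebra

namespace LieIdeal

variable {R L : Type*} [CommRing R] [LieRing L] [LieAlgebra R L]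

theorem lie_mem_of_mem_span_singleton_sup {I : LieIdeal R L} {x a b : L}
    (ha : a ∈ (R ∙ x) ⊔ I.toSubmodule) (hb : b ∈ (R ∙ x) ⊔ I.toSubmodule) : ⁅a, b⁆ ∈ I := by
  obtain ⟨_, hs, n, hn, rfl⟩ := Submodule.mem_sup.mp ha
  obtain ⟨_, ht, m, hm, rfl⟩ := Submodule.mem_sup.mp hb
  obtain ⟨s, rfl⟩ := Submodule.mem_span_singleton.mp hs
  obtain ⟨t, rfl⟩ := Submodule.mem_span_singleton.mp ht
  have hexpand : ⁅s • x + n, t • x + m⁆ = s • ⁅x, m⁆ + (⁅n, t • x⁆ + ⁅n, m⁆) := by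
    simp only [add_lie, lie_add, smul_lie, lie_smul, lie_self, smul_zero, zero_add]
    abel
  rw [hexpand]
  exact add_mem (I.smul_mem s (lie_mem_right R L I x m hm))
    (add_mem (lie_mem_left R L I n _ hn) (lie_mem_left R L I n m hn))

def spanSingletonSup (I : LieIdeal R L) (x : L) : LieSubalgebra R L :=
  { (R ∙ x) ⊔ I.toSubmodule with
    lie_mem' := fun ha hb ↦ Submodule.mem_sup_right (lie_mem_of_mem_span_singleton_sup ha hb) }

theorem derived_le_of_spanSingletonSup_eq_top {I : LieIdeal R L} {x : L}
    (h : I.spanSingletonSup x = ⊤) : ⁅(⊤ : LieIdeal R L), ⊤⁆ ≤ I := by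
  have hmem (a : L) : a ∈ (R ∙ x) ⊔ I.toSubmodule := by
    change a ∈ I.spanSingletonSup x
    simp [h]
  rw [LieSubmodule.lieIdeal_oper_eq_span, LieSubmodule.lieSpan_le]
  rintro _ ⟨a, b, rfl⟩
  exact lie_mem_of_mem_span_singleton_sup (hmem a) (hmem b)

def quotientMk (I : LieIdeal R L) : L →ₗ⁅R⁆ L ⧸ I :=
  { LieSubmodule.Quotient.mk' I with map_lie' := rfl }

theorem derivedSeries_two_quotient_lie_self_eq_bot {I : LieIdeal R L}
    (h : ⁅(⊤ : LieIdeal R L), ⊤⁆ ≤ I) : LieAlgebra.derivedSeries R (L ⧸ ⁅I, I⁆) 2 = ⊥ := by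
  have hsurj : Function.Surjective (quotientMk ⁅I, I⁆) := LieSubmodule.Quotient.surjective_mk' _
  rw [← derivedSeries_map_eq 2 hsurj, map_eq_bot_iff]
  calc LieAlgebra.derivedSeries R L 2 ≤ ⁅I, I⁆ := LieSubmodule.mono_lie h h
    _ ≤ (quotientMk ⁅I, I⁆).ker := fun y hy ↦ LieSubmodule.Quotient.mk_eq_zero'.mpr hy

end LieIdeal

theorem N_spanSingletonSup_e0_eq_top : N.spanSingletonSup e0 = ⊤ :=
  FreeLieAlgebra.eq_top_of_forall_of_mem _ fun
    | false => Submodule.mem_sup_left (Submodule.mem_span_singleton_self e0)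
    | true => Submodule.mem_sup_right (LieSubmodule.subset_lieSpan rfl)

/-- As `e₀, e₁` have degree -1, `n^PL_{≤-2}` is the derived ideal `⁅n^PL, n^PL⁆`. -/
theorem polylog_quotient_low_degrees_abelian :
    ⁅(⁅(⊤ : LieIdeal ℚ nPL), (⊤ : LieIdeal ℚ nPL)⁆ : LieIdeal ℚ nPL),
      (⁅(⊤ : LieIdeal ℚ nPL), (⊤ : LieIdeal ℚ nPL)⁆ : LieIdeal ℚ nPL)⁆
    = (⊥ : LieIdeal ℚ nPL) :=
  LieIdeal.derivedSeries_two_quotient_lie_self_eq_bot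
    (LieIdeal.derived_le_of_spanSingletonSup_eq_top N_spanSingletonSup_e0_eq_top)
end
end

section
/- With notation as in the parametrization of G_m-equivariant cocycles: for the universal degree-preserving homomorphism c from the free graded Lie group π(Σ) (generators τ_j in degree -1, σ_r in odd degrees -r ≤ -3) to the truncated polylogarithmic group π^PL_{≥-n}, the pullback of the function Li_n is given by c♯(Li_n) = Σ f_{τ_{i_1} ⋯ τ_{i_r} σ} · Φ^{τ_{i_1}}_0 ⋯ Φ^{τ_{i_r}}_0 · Φ^{σ}_{s}, where the sum is over all tuples (τ_{i_1}, ..., τ_{i_r}) of degree -1 generators and degree -s generators σ with r + s = n, 1 ≤ s ≤ n; similarly c♯(log) = Σ_j f_{τ_j} Φ^{τ_j}_0. Here Φ^{σ}_s := ⟨Li_s(c), σ⟩ and Φ^{τ}_0 := ⟨log(c), τ⟩ are the coordinates on the affine space of cocycles. -/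
noncomputable section

open TensorProduct

/-- The multiset of shuffles of two words. -/
def shuffles {α : Type*} : List α → List α → Multiset (List α)
  | [], w => {w}
  | u, [] => {u}
  | a :: u, b :: v =>
      ((shuffles u (b :: v)).map (a :: ·)) + ((shuffles (a :: u) v).map (b :: ·))
  termination_by u v => u.length + v.length

/-- The shuffle algebra on the alphabet `α`: functions on words with finite support,
with basis `f_w = Finsupp.single w 1`. -/
abbrev Sh (α : Type*) : Type _ := List α →₀ ℚ

/-- The shuffle product. -/
def shMul {α : Type*} (p q : Sh α) : Sh α :=
  p.sum fun u a => q.sum fun v b =>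
    (a * b) • ((shuffles u v).map fun w => Finsupp.single w (1 : ℚ)).sum

/-- Shuffle powers. -/
def shPow {α : Type*} (x : Sh α) : ℕ → Sh α
  | 0 => Finsupp.single [] 1
  | i + 1 => shMul x (shPow x i)

/-- The deconcatenation coproduct (with the two tensor factors recording the second,
resp. first, piece of the word, matching the conventions of the paper, where the
pairing satisfies `⟨Δ p, u ⊗ v⟩ = p (v ++ u)`). -/
def delta {α : Type*} : Sh α →ₗ[ℚ] TensorProduct ℚ (Sh α) (Sh α) :=
  Finsupp.lsum ℚ fun w => LinearMap.toSpanSingleton ℚ _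
    (∑ i ∈ Finset.range (w.length + 1),
      Finsupp.single (w.drop i) (1 : ℚ) ⊗ₜ[ℚ] Finsupp.single (w.take i) (1 : ℚ))

/-- The reduced coproduct. -/
def deltaRed {α : Type*} (p : Sh α) : TensorProduct ℚ (Sh α) (Sh α) :=
  delta p - Finsupp.single [] 1 ⊗ₜ[ℚ] p - p ⊗ₜ[ℚ] Finsupp.single [] 1

/-- The graded alphabet of free generators of `π(Σ)`: `τ_1, …, τ_{sc}` in degree 1 and
`σ_r` for odd `3 ≤ r ≤ n` in degree `r`. -/
abbrev Letter (sc n : ℕ) : Type := Fin sc ⊕ {r : Fin (n + 1) // Odd (r : ℕ) ∧ 3 ≤ (r : ℕ)}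

/-- Degree of a letter. -/
def ldeg {sc n : ℕ} : Letter sc n → ℕ := Sum.elim (fun _ => 1) (fun r => (r.1 : ℕ))

/-- Degree of a word. -/
def wdeg {sc n : ℕ} (w : List (Letter sc n)) : ℕ := (w.map ldeg).sum

-- inner split count
lemma split_count {α : Type*} [DecidableEq α] (w u v : List α) :
    (∑ i ∈ Finset.range (w.length + 1),
      if (w.drop i, w.take i) = (u, v) then (1:ℚ) else 0) =
    if v ++ u = w then 1 else 0 := by
  by_cases h : v ++ u = w
  · subst h
    rw [if_pos rfl, Finset.sum_eq_single_of_mem v.length]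
    · rw [if_pos (by rw [List.drop_left, List.take_left])]
    · simp [Finset.mem_range]
    · intro i hi hne
      rw [if_neg]
      intro hc
      apply hne
      have h1 : (v ++ u).take i = v := (Prod.mk.injEq _ _ _ _ ▸ hc).2
      have := congrArg List.length h1
      simp [List.length_take] at this
      simp [Finset.mem_range, List.length_append] at hi
      omega
  · rw [if_neg h, Finset.sum_eq_zero]
    intro i _
    rw [if_neg]
    intro hc
    obtain ⟨h1, h2⟩ := Prod.mk.injEq _ _ _ _ ▸ hc
    exact h (by rw [← h1, ← h2, List.take_append_drop])

lemma delta_pair {α : Type*} [DecidableEq α] (p : Sh α) (u v : List α) :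
    finsuppTensorFinsupp' ℚ (List α) (List α) (delta p) (u, v) = p (v ++ u) := by
  rw [← LinearEquiv.coe_coe]
  set E := (finsuppTensorFinsupp' ℚ (List α) (List α)).toLinearMap with hE
  rw [delta, Finsupp.lsum_apply, Finsupp.sum, map_sum, Finset.sum_apply']
  have key : ∀ w ∈ p.support,
      (E ((LinearMap.toSpanSingleton ℚ (Sh α ⊗[ℚ] Sh α)
          (∑ i ∈ Finset.range (w.length + 1),
            Finsupp.single (w.drop i) (1 : ℚ) ⊗ₜ[ℚ] Finsupp.single (w.take i) (1 : ℚ))) (p w)))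
        (u, v) = if v ++ u = w then p w else 0 := by
    intro w _
    rw [LinearMap.toSpanSingleton_apply, map_smul, map_sum, Finsupp.smul_apply,
      Finset.sum_apply']
    have h2 : ∀ i ∈ Finset.range (w.length + 1),
        (E (Finsupp.single (w.drop i) (1 : ℚ) ⊗ₜ[ℚ] Finsupp.single (w.take i) (1 : ℚ))) (u, v)
          = if (w.drop i, w.take i) = (u, v) then (1:ℚ) else 0 := by
      intro i _
      rw [hE, LinearEquiv.coe_coe, finsuppTensorFinsupp'_single_tmul_single,
        Finsupp.single_apply, one_mul]
    rw [Finset.sum_congr rfl h2, split_count]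
    split <;> simp
  rw [Finset.sum_congr rfl key]
  by_cases h : v ++ u ∈ p.support
  · rw [Finset.sum_eq_single_of_mem _ h (fun b _ hb => if_neg (fun hc => hb hc.symm)),
      if_pos rfl]
  · rw [Finset.sum_eq_zero (fun b hb => if_neg (fun (hc : v ++ u = b) => h (hc ▸ hb))),
      Finsupp.notMem_support_iff.mp h]

lemma multiset_single_sum {α : Type*} [DecidableEq α] (S : Multiset (List α)) (x : List α) :
    ((S.map fun w => Finsupp.single w (1:ℚ)).sum) x = (S.count x : ℚ) := by
  induction S using Multiset.induction_on with
  | empty => simp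
  | cons a s ih =>
    simp only [Multiset.map_cons, Multiset.sum_cons, Finsupp.add_apply, ih,
      Multiset.count_cons, Finsupp.single_apply]
    push_cast
    by_cases h : a = x
    · subst h; simp [add_comm]
    · rw [if_neg h, if_neg (fun hh => h hh.symm)]; ring

lemma shMul_apply {α : Type*} [DecidableEq α] (p q : Sh α) (x : List α) :
    shMul p q x = p.sum fun u a => q.sum fun v b =>
      (a * b) * ((shuffles u v).count x : ℚ) := by
  rw [shMul, Finsupp.sum_apply]
  apply Finsupp.sum_congr
  intro u _
  rw [Finsupp.sum_apply]
  apply Finsupp.sum_congr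
  intro v _
  rw [Finsupp.smul_apply, multiset_single_sum, smul_eq_mul]

lemma shuffles_nil_left {α : Type*} (w : List α) : shuffles [] w = {w} := by
  rw [shuffles]

lemma shuffles_nil_right {α : Type*} (u : List α) : shuffles u [] = {u} := by
  cases u with
  | nil => rw [shuffles]
  | cons a u =>
    rw [shuffles]
    simp

lemma shuffles_cons_cons {α : Type*} (a b : α) (u v : List α) :
    shuffles (a :: u) (b :: v) =
      ((shuffles u (b :: v)).map (a :: ·)) + ((shuffles (a :: u) v).map (b :: ·)) := by
  rw [shuffles]

lemma length_of_mem_shuffles {α : Type*} :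
    ∀ (u v w : List α), w ∈ shuffles u v → w.length = u.length + v.length := by
  intro u v
  induction u, v using shuffles.induct with
  | case1 w => intro w' h; rw [shuffles_nil_left, Multiset.mem_singleton] at h; simp [h]
  | case2 u h =>
    intro w' hw; rw [shuffles_nil_right, Multiset.mem_singleton] at hw; simp [hw]
  | case3 a u b v ih1 ih2 =>
    intro w hw
    rw [shuffles_cons_cons] at hw
    simp only [Multiset.mem_add, Multiset.mem_map] at hw
    rcases hw with ⟨w', hw', rfl⟩ | ⟨w', hw', rfl⟩
    · have := ih1 w' hw'; simp at this ⊢; omega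
    · have := ih2 w' hw'; simp at this ⊢; omega

lemma sum_pick {β : Type*} [DecidableEq β] (f : β →₀ ℚ) (a : β) (g : ℚ → ℚ) (hg : g 0 = 0) :
    (f.sum fun x b => if a = x then g b else 0) = g (f a) := by
  rw [Finsupp.sum_ite_eq]
  split
  · rfl
  · next h => rw [Finsupp.notMem_support_iff.mp h, hg]

lemma shMul_apply_nil {α : Type*} [DecidableEq α] (p q : Sh α) :
    shMul p q [] = p [] * q [] := by
  rw [shMul_apply]
  have step : (p.sum fun u a => q.sum fun v b => (a * b) * ((shuffles u v).count [] : ℚ))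
      = p.sum fun u a => if [] = u then a * q [] else 0 := by
    apply Finsupp.sum_congr
    intro u _
    by_cases hu : u = []
    · subst hu
      rw [if_pos rfl]
      have : (q.sum fun v b => ((p []) * b) * ((shuffles [] v).count [] : ℚ))
          = q.sum fun v b => if [] = v then p [] * b else 0 := by
        apply Finsupp.sum_congr
        intro v _
        rw [shuffles_nil_left, Multiset.count_singleton]
        by_cases hv : ([] : List α) = v
        · rw [if_pos hv, if_pos hv]; push_cast; ring
        · rw [if_neg hv, if_neg hv]; push_cast; ring
      rw [this, sum_pick q [] (fun b => p [] * b) (by ring)]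
    · rw [if_neg (fun h => hu h.symm)]
      apply Finset.sum_eq_zero
      intro v _
      have : (shuffles u v).count [] = 0 := by
        rw [Multiset.count_eq_zero]
        intro hmem
        have hl := length_of_mem_shuffles u v [] hmem
        simp only [List.length_nil] at hl
        exact hu (List.length_eq_zero_iff.mp (by omega))
      simp [this]
  rw [step, sum_pick p [] (fun a => a * q []) (by ring)]

lemma shMul_apply_single {α : Type*} [DecidableEq α] (p q : Sh α) (x : α) (hp : p [] = 0) :
    shMul p q [x] = p [x] * q [] := by
  rw [shMul_apply]
  have step : (p.sum fun u a => q.sum fun v b => (a * b) * ((shuffles u v).count [x] : ℚ))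
      = p.sum fun u a => if [x] = u then a * q [] else 0 := by
    apply Finsupp.sum_congr
    intro u hu
    by_cases hux : u = [x]
    · subst hux
      rw [if_pos rfl]
      have : (q.sum fun v b => ((p [x]) * b) * ((shuffles [x] v).count [x] : ℚ))
          = q.sum fun v b => if [] = v then p [x] * b else 0 := by
        apply Finsupp.sum_congr
        intro v _
        by_cases hv : ([] : List α) = v
        · subst hv
          rw [shuffles_nil_right, Multiset.count_singleton, if_pos rfl, if_pos rfl]
          push_cast; ring
        · rw [if_neg hv]
          have : (shuffles [x] v).count [x] = 0 := by
            rw [Multiset.count_eq_zero]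
            intro hmem
            have hlen := length_of_mem_shuffles [x] v [x] hmem
            simp only [List.length_cons, List.length_nil] at hlen
            exact hv (List.length_eq_zero_iff.mp (by omega)).symm
          rw [this]; push_cast; ring
      rw [this, sum_pick q [] (fun b => p [x] * b) (by ring)]
    · rw [if_neg (fun h => hux h.symm)]
      apply Finset.sum_eq_zero
      intro v _
      have hune : u ≠ [] := by
        intro h
        exact (Finsupp.mem_support_iff.mp hu) (h ▸ hp)
      have : (shuffles u v).count [x] = 0 := by
        rw [Multiset.count_eq_zero]
        intro hmem
        have hlen := length_of_mem_shuffles u v [x] hmem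
        simp only [List.length_cons, List.length_nil] at hlen
        have hul : u.length ≠ 0 := fun h => hune (List.length_eq_zero_iff.mp h)
        have hv : v = [] := List.length_eq_zero_iff.mp (by omega)
        subst hv
        rw [shuffles_nil_right, Multiset.mem_singleton] at hmem
        exact hux hmem.symm
      simp [this]
  rw [step, sum_pick p [x] (fun a => a * q []) (by ring)]

lemma delta_pairE {α : Type*} [DecidableEq α] (p : Sh α) (u v : List α) :
    (finsuppTensorFinsupp' ℚ (List α) (List α)).toLinearMap (delta p) (u, v) = p (v ++ u) :=
  delta_pair p u v

lemma tmul_pairE {α : Type*} (p q : Sh α) (u v : List α) :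
    (finsuppTensorFinsupp' ℚ (List α) (List α)).toLinearMap (p ⊗ₜ[ℚ] q) (u, v) = p u * q v :=
  finsuppTensorFinsupp'_apply_apply ℚ (List α) (List α) p q u v

section MainAux
variable {sc n : ℕ}

lemma wdeg_single (x : Letter sc n) : wdeg [x] = ldeg x := by simp [wdeg]

lemma ldeg_inr (r : {r : Fin (n + 1) // Odd (r : ℕ) ∧ 3 ≤ (r : ℕ)}) :
    ldeg (Sum.inr r : Letter sc n) = (r.1 : ℕ) := rfl

lemma all_inl_list : ∀ (t : List (Letter sc n)), (∀ y ∈ t, ∃ j, y = Sum.inl j) →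
    ∃ js : List (Fin sc), t = js.map Sum.inl := by
  intro t
  induction t with
  | nil => exact fun _ => ⟨[], rfl⟩
  | cons y t ih =>
    intro h
    obtain ⟨j, rfl⟩ := h y (by simp)
    obtain ⟨js, rfl⟩ := ih (fun z hz => h z (by simp [hz]))
    exact ⟨j :: js, rfl⟩

end MainAux

/-!
STATEMENT 16: Let `c` be the universal degree-preserving homomorphism (G_m-equivariant
cocycle) from the free graded pro-unipotent group `π(Σ)` on generators `τ_j` (degree -1)
and `σ_r` (odd degrees `-r`, `3 ≤ r ≤ n`) to the truncated polylogarithmic group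
`π^PL_{≥-n}`.  It is encoded by `ℓ = c♯(log)` and `L m = c♯(Li_m)` (for `1 ≤ m ≤ n`),
which are homogeneous and satisfy the coproduct identities pulled back along the
Hopf-algebra map `c♯`.  With coordinates `Φ^τ_0 = ⟨log(c), τ⟩ = ℓ [τ]` and
`Φ^σ_s = ⟨Li_s(c), σ⟩ = L s [σ]`, we have the expansion in the shuffle basis
`c♯(Li_n) = Σ_{r+s=n, 1≤s≤n} Σ_{σ : deg σ = s} Σ_{(τ_{i_1},…,τ_{i_r})}
  f_{σ τ_{i_1} ⋯ τ_{i_r}} · Φ^σ_s · Φ^{τ_{i_1}}_0 ⋯ Φ^{τ_{i_r}}_0`,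
and similarly `c♯(log) = Σ_j f_{τ_j} Φ^{τ_j}_0`.
-/
theorem universal_cocycle_evaluation {sc n : ℕ} (hn : 1 ≤ n)
    (ℓ : Sh (Letter sc n)) (L : ℕ → Sh (Letter sc n))
    (hℓdeg : ∀ w, wdeg w ≠ 1 → ℓ w = 0)
    (hLdeg : ∀ m, 1 ≤ m → m ≤ n → ∀ w, wdeg w ≠ m → L m w = 0)
    (hℓprim : delta ℓ = Finsupp.single [] 1 ⊗ₜ[ℚ] ℓ + ℓ ⊗ₜ[ℚ] Finsupp.single [] 1)
    (hLdelta : ∀ m, 1 ≤ m → m ≤ n →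
      delta (L m) = Finsupp.single [] 1 ⊗ₜ[ℚ] L m + L m ⊗ₜ[ℚ] Finsupp.single [] 1
        + ∑ i ∈ Finset.Icc 1 (m - 1),
            (((Nat.factorial i : ℚ)⁻¹) • shPow ℓ i) ⊗ₜ[ℚ] L (m - i)) :
    (ℓ = ∑ j : Fin sc,
        Finsupp.single [(Sum.inl j : Letter sc n)] (ℓ [Sum.inl j])) ∧
    L n = ∑ s ∈ Finset.Icc 1 n, ∑ σ : Letter sc n,
        ∑ τs : Fin (n - s) → Fin sc,
          if ldeg σ = s then
            Finsupp.single (σ :: List.ofFn fun k => (Sum.inl (τs k) : Letter sc n))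
              ((L s) [σ] * ∏ k : Fin (n - s), ℓ [(Sum.inl (τs k) : Letter sc n)])
          else 0 := by
  classical
  -- scalar form of primitivity
  have eqℓ : ∀ u v : List (Letter sc n), ℓ (v ++ u) =
      (Finsupp.single [] (1:ℚ)) u * ℓ v + ℓ u * (Finsupp.single [] (1:ℚ)) v := by
    intro u v
    have h := congrArg (fun z =>
      ((finsuppTensorFinsupp' ℚ (List (Letter sc n)) (List (Letter sc n))).toLinearMap z) (u, v)) hℓprim
    simp only [map_add, Finsupp.add_apply, tmul_pairE, delta_pairE] at h
    exact h
  have hℓnil : ℓ ([] : List (Letter sc n)) = 0 := by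
    have h := eqℓ [] []
    simp [Finsupp.single_apply] at h
    linarith
  have hℓlong : ∀ (u v : List (Letter sc n)), u ≠ [] → v ≠ [] → ℓ (v ++ u) = 0 := by
    intro u v hu hv
    rw [eqℓ u v, Finsupp.single_apply, Finsupp.single_apply,
      if_neg (fun h => hu h.symm), if_neg (fun h => hv h.symm)]
    ring
  have hℓinr : ∀ r, ℓ [(Sum.inr r : Letter sc n)] = 0 := by
    intro r
    apply hℓdeg
    rw [wdeg_single, ldeg_inr]
    omega
  -- part 1
  have part1 : ℓ = ∑ j : Fin sc,
      Finsupp.single [(Sum.inl j : Letter sc n)] (ℓ [Sum.inl j]) := by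
    ext w
    rw [Finset.sum_apply']
    match w with
    | [] =>
      rw [hℓnil, Finset.sum_eq_zero]
      intro j _
      rw [Finsupp.single_apply, if_neg (by simp)]
    | (Sum.inl j₀) :: [] =>
      rw [Finset.sum_eq_single_of_mem j₀ (Finset.mem_univ j₀)]
      · rw [Finsupp.single_apply, if_pos rfl]
      · intro j _ hj
        rw [Finsupp.single_apply, if_neg (by simp [hj])]
    | (Sum.inr r) :: [] =>
      rw [hℓinr, Finset.sum_eq_zero]
      intro j _
      rw [Finsupp.single_apply, if_neg (by simp)]
    | x :: y :: t =>
      have : (x :: y :: t : List (Letter sc n)) = [x] ++ (y :: t) := rfl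
      rw [show (x :: y :: t : List (Letter sc n)) = [x] ++ (y :: t) from rfl,
        hℓlong (y :: t) [x] (by simp) (by simp), Finset.sum_eq_zero]
      intro j _
      rw [Finsupp.single_apply, if_neg (by simp)]
  refine ⟨part1, ?_⟩
  -- scalar form of the coproduct identity
  have eqL : ∀ m, 1 ≤ m → m ≤ n → ∀ u v : List (Letter sc n), L m (v ++ u) =
      (Finsupp.single [] (1:ℚ)) u * (L m) v + (L m) u * (Finsupp.single [] (1:ℚ)) v
      + ∑ i ∈ Finset.Icc 1 (m-1),
          (((Nat.factorial i : ℚ)⁻¹ • shPow ℓ i) u * (L (m-i)) v) := by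
    intro m h1 h2 u v
    have h := congrArg (fun z =>
      ((finsuppTensorFinsupp' ℚ (List (Letter sc n)) (List (Letter sc n))).toLinearMap z) (u, v)) (hLdelta m h1 h2)
    simp only [map_add, map_sum, Finsupp.add_apply, Finset.sum_apply',
      tmul_pairE, delta_pairE] at h
    exact h
  have hpow0 : ∀ i, 1 ≤ i → shPow ℓ i ([] : List (Letter sc n)) = 0 := by
    intro i hi
    match i, hi with
    | (j+1), _ =>
      show shMul ℓ (shPow ℓ j) [] = 0
      rw [shMul_apply_nil, hℓnil, zero_mul]
  have hpow1 : ∀ x : Letter sc n, shPow ℓ 1 [x] = ℓ [x] := by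
    intro x
    show shMul ℓ (shPow ℓ 0) [x] = ℓ [x]
    rw [shMul_apply_single ℓ _ x hℓnil]
    show ℓ [x] * (Finsupp.single ([] : List (Letter sc n)) (1:ℚ)) [] = ℓ [x]
    rw [Finsupp.single_apply, if_pos rfl, mul_one]
  have hpowk : ∀ i, 2 ≤ i → ∀ x : Letter sc n, shPow ℓ i [x] = 0 := by
    intro i hi x
    match i, hi with
    | (j+1), _ =>
      show shMul ℓ (shPow ℓ j) [x] = 0
      rw [shMul_apply_single ℓ _ x hℓnil, hpow0 j (by omega), mul_zero]
  have hLnil : ∀ m, 1 ≤ m → m ≤ n → L m ([] : List (Letter sc n)) = 0 := by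
    intro m h1 h2
    have h := eqL m h1 h2 [] []
    have hz : ∀ i ∈ Finset.Icc 1 (m-1),
        ((Nat.factorial i : ℚ)⁻¹ • shPow ℓ i) ([] : List (Letter sc n)) * (L (m-i)) [] = 0 := by
      intro i hi
      rw [Finsupp.smul_apply, hpow0 i (Finset.mem_Icc.mp hi).1, smul_zero, zero_mul]
    rw [Finset.sum_eq_zero hz, add_zero] at h
    simp [Finsupp.single_apply] at h
    linarith
  have rec2 : ∀ m, 2 ≤ m → m ≤ n → ∀ (v : List (Letter sc n)) (x : Letter sc n), v ≠ [] →
      L m (v ++ [x]) = ℓ [x] * L (m-1) v := by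
    intro m hm2 hmn v x hv
    have h := eqL m (by omega) hmn [x] v
    rw [Finsupp.single_apply, Finsupp.single_apply, if_neg (by simp),
      if_neg (fun hh => hv hh.symm)] at h
    rw [h, Finset.sum_eq_single_of_mem 1 (by simp [Finset.mem_Icc]; omega)]
    · rw [Finsupp.smul_apply, hpow1 x]
      simp [Nat.factorial]
    · intro i hi hi1
      rw [Finsupp.smul_apply, hpowk i (by rcases Finset.mem_Icc.mp hi with ⟨a, b⟩; omega) x,
        smul_zero, zero_mul]
  have rec1 : ∀ (v : List (Letter sc n)) (x : Letter sc n), v ≠ [] → L 1 (v ++ [x]) = 0 := by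
    intro v x hv
    have h := eqL 1 le_rfl hn [x] v
    rw [Finsupp.single_apply, Finsupp.single_apply, if_neg (by simp),
      if_neg (fun hh => hv hh.symm)] at h
    simpa using h
  -- the structural description of L m
  have main : ∀ (t : List (Letter sc n)) (x : Letter sc n) m, 1 ≤ m → m ≤ n →
      L m (x :: t) = if t.length ≤ m - 1 then
        L (m - t.length) [x] * (t.map fun y => ℓ [y]).prod else 0 := by
    intro t
    induction t using List.reverseRecOn with
    | nil =>
      intro x m h1 h2
      rw [if_pos (by simp)]
      simp
    | append_singleton t' y ih =>
      intro x m h1 h2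
      have hc : (x :: (t' ++ [y]) : List (Letter sc n)) = (x :: t') ++ [y] := rfl
      by_cases hm : 2 ≤ m
      · rw [hc, rec2 m hm h2 (x :: t') y (by simp), ih x (m-1) (by omega) (by omega)]
        by_cases hlen : t'.length ≤ m - 1 - 1
        · rw [if_pos hlen, if_pos (by simp; omega)]
          have he : m - 1 - t'.length = m - (t' ++ [y]).length := by simp; omega
          rw [he, List.map_append, List.prod_append]
          simp
          ring
        · rw [if_neg hlen, if_neg (by simp; omega), mul_zero]
      · have hm1 : m = 1 := by omega
        subst hm1
        rw [hc, rec1 (x :: t') y (by simp), if_neg (by simp)]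
  -- final computation
  ext w
  rw [Finset.sum_apply']
  have hterm : ∀ s ∈ Finset.Icc 1 n, ∀ σ : Letter sc n, ∀ τs : Fin (n - s) → Fin sc,
      ((if ldeg σ = s then
        Finsupp.single (σ :: List.ofFn fun k => (Sum.inl (τs k) : Letter sc n))
          ((L s) [σ] * ∏ k : Fin (n - s), ℓ [(Sum.inl (τs k) : Letter sc n)])
        else 0) : Sh (Letter sc n)) w =
      (if ldeg σ = s ∧ (σ :: List.ofFn fun k => (Sum.inl (τs k) : Letter sc n)) = w then
        ((L s) [σ] * ∏ k : Fin (n - s), ℓ [(Sum.inl (τs k) : Letter sc n)]) else 0) := by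
    intro s _ σ τs
    by_cases h : ldeg σ = s
    · rw [if_pos h, Finsupp.single_apply]
      by_cases h2 : (σ :: List.ofFn fun k => (Sum.inl (τs k) : Letter sc n)) = w
      · rw [if_pos h2, if_pos ⟨h, h2⟩]
      · rw [if_neg h2, if_neg (fun hh => h2 hh.2)]
    · rw [if_neg h, if_neg (fun hh => h hh.1)]
      rfl
  match w with
  | [] =>
    rw [hLnil n hn le_rfl, Finset.sum_eq_zero]
    intro s hs
    rw [Finset.sum_apply', Finset.sum_eq_zero]
    intro σ _
    rw [Finset.sum_apply', Finset.sum_eq_zero]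
    intro τs _
    rw [hterm s hs σ τs, if_neg (by simp)]
  | x :: t =>
    rw [main t x n hn le_rfl]
    -- compute the triple sum
    have inner : ∀ s ∈ Finset.Icc 1 n,
        (∑ σ : Letter sc n, ∑ τs : Fin (n - s) → Fin sc,
          (if ldeg σ = s ∧ (σ :: List.ofFn fun k => (Sum.inl (τs k) : Letter sc n)) = x :: t then
            ((L s) [σ] * ∏ k : Fin (n - s), ℓ [(Sum.inl (τs k) : Letter sc n)]) else 0))
        = if ldeg x = s ∧ n - s = t.length then
            L s [x] * (t.map fun y => ℓ [y]).prod else 0 := by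
      intro s hs
      rw [Finset.sum_eq_single_of_mem x (Finset.mem_univ x)]
      · -- sum over τs
        by_cases hex : ∃ g : Fin (n - s) → Fin sc,
            (List.ofFn fun k => (Sum.inl (g k) : Letter sc n)) = t
        · obtain ⟨g, hg⟩ := hex
          have hlen : n - s = t.length := by
            rw [← hg, List.length_ofFn]
          rw [Finset.sum_eq_single_of_mem g (Finset.mem_univ g)]
          · by_cases hd : ldeg x = s
            · rw [if_pos ⟨hd, by rw [hg]⟩, if_pos ⟨hd, hlen⟩]
              congr 1
              rw [← hg, List.map_ofFn, List.prod_ofFn]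
              rfl
            · rw [if_neg (fun hh => hd hh.1), if_neg (fun hh => hd hh.1)]
          · intro g' _ hg'
            rw [if_neg]
            rintro ⟨-, hh⟩
            apply hg'
            have : (List.ofFn fun k => (Sum.inl (g' k) : Letter sc n)) =
                (List.ofFn fun k => (Sum.inl (g k) : Letter sc n)) := by
              rw [hg]
              exact (List.cons.injEq _ _ _ _ ▸ hh).2
            funext k
            have := congrFun (List.ofFn_injective this) k
            exact Sum.inl.injEq _ _ ▸ this
        · rw [Finset.sum_eq_zero (fun g _ => by
            rw [if_neg]
            rintro ⟨-, hh⟩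
            exact hex ⟨g, (List.cons.injEq _ _ _ _ ▸ hh).2⟩)]
          by_cases hl : n - s = t.length
          · have hbad : ¬ (∀ y ∈ t, ∃ j, y = Sum.inl j) := by
              intro hall
              obtain ⟨js, rfl⟩ := all_inl_list t hall
              apply hex
              have hlen2 : js.length = n - s := by
                rw [hl, List.length_map]
              refine ⟨fun k => js.get (Fin.cast hlen2.symm k), ?_⟩
              apply List.ext_getElem
              · simp [hlen2]
              · intro i h1i h2i
                simp
            have hy : ∃ y ∈ t, ∃ r, y = Sum.inr r := by
              by_contra hcon
              push_neg at hcon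
              apply hbad
              intro y hy
              cases y with
              | inl j => exact ⟨j, rfl⟩
              | inr r => exact absurd rfl (hcon (Sum.inr r) hy r)
            obtain ⟨y, hyt, r, rfl⟩ := hy
            have hprod : ((t.map fun y => ℓ [y]).prod : ℚ) = 0 := by
              apply List.prod_eq_zero
              rw [List.mem_map]
              exact ⟨Sum.inr r, hyt, hℓinr r⟩
            by_cases hd : ldeg x = s
            · rw [if_pos ⟨hd, hl⟩, hprod, mul_zero]
            · rw [if_neg (fun hh => hd hh.1)]
          · rw [if_neg (fun hh => hl hh.2)]
      · intro σ _ hσ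
        rw [Finset.sum_eq_zero]
        intro τs _
        rw [if_neg]
        rintro ⟨-, hh⟩
        exact hσ (List.cons.injEq _ _ _ _ ▸ hh).1
    have push : ∀ s ∈ Finset.Icc 1 n,
        ((∑ σ : Letter sc n, ∑ τs : Fin (n - s) → Fin sc,
          if ldeg σ = s then
            Finsupp.single (σ :: List.ofFn fun k => (Sum.inl (τs k) : Letter sc n))
              ((L s) [σ] * ∏ k : Fin (n - s), ℓ [(Sum.inl (τs k) : Letter sc n)])
          else 0) : Sh (Letter sc n)) (x :: t)
        = if ldeg x = s ∧ n - s = t.length then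
            L s [x] * (t.map fun y => ℓ [y]).prod else 0 := by
      intro s hs
      rw [Finset.sum_apply']
      rw [Finset.sum_congr rfl (fun σ _ => by
        rw [Finset.sum_apply',
          Finset.sum_congr rfl (fun τs _ => hterm s hs σ τs)])]
      exact inner s hs
    rw [Finset.sum_congr rfl push]
    by_cases hl : t.length ≤ n - 1
    · by_cases hd : ldeg x = n - t.length
      · rw [if_pos hl, Finset.sum_eq_single_of_mem (n - t.length)
          (Finset.mem_Icc.mpr ⟨by omega, by omega⟩)]
        · rw [if_pos ⟨hd, by omega⟩]
        · intro s hs hss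
          rw [if_neg]
          rintro ⟨-, h2⟩
          rcases Finset.mem_Icc.mp hs with ⟨ha, hb⟩
          exact hss (by omega)
      · rw [if_pos hl, hLdeg (n - t.length) (by omega) (by omega) [x]
          (by rw [wdeg_single]; exact hd), zero_mul]
        symm
        apply Finset.sum_eq_zero
        intro s hs
        rw [if_neg]
        rintro ⟨h1, h2⟩
        rcases Finset.mem_Icc.mp hs with ⟨ha, hb⟩
        exact hd (by rw [h1]; omega)
    · rw [if_neg hl]
      symm
      apply Finset.sum_eq_zero
      intro s hs
      rw [if_neg]
      rintro ⟨-, h2⟩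
      rcases Finset.mem_Icc.mp hs with ⟨ha, hb⟩
      omega
end
end
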